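/- Let D ∈ ℕ, p ≤ D, and let I be a subset of Fin D of cardinality p, with complement Iᶜ of cardinality D − p. Let σ_I be the permutation of Fin D that sends 0,…,p−1 (in order) to the elements of I listed in increasing order and sends p,…,D−1 (in order) to the elements of Iᶜ listed in increasing order; likewise let σ_{Iᶜ} be the permutation sending 0,…,D−p−1 to the elements of Iᶜ in increasing order and D−p,…,D−1 to the elements of I in increasing order. Then sign(σ_I) · sign(σ_{Iᶜ}) = (−1)^{p(D−p)}. -/

import Mathlib

/-!
Both `mergePerm I` and `mergePerm Iᶜ` list the elements of `I` and of `Iᶜ` in increasing order,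
one block after the other; they only differ by which block comes first. So `mergePerm Iᶜ` is
`mergePerm I` precomposed with the rotation `x ↦ x + p` of `Fin D`, and the product of the two
signs is the sign of that rotation, `(-1) ^ ((D - 1) * p) = (-1) ^ (p * (D - p))`.
-/

/-- The "merge" permutation of `Fin D` associated with a subset `I`: it sends
`0, …, I.card - 1` (in order) to the elements of `I` listed in increasing order, and sends
`I.card, …, D - 1` (in order) to the elements of `Iᶜ` listed in increasing order. -/
noncomputable def mergePerm {D : ℕ} (I : Finset (Fin D)) : Equiv.Perm (Fin D) :=
  ((finCongr (show I.card + Iᶜ.card = D by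
      rw [Finset.card_add_card_compl, Fintype.card_fin])).symm).trans
    (finSumFinEquiv.symm.trans
      (((I.orderIsoOfFin rfl).toEquiv.sumCongr (Iᶜ.orderIsoOfFin rfl).toEquiv).trans
        (((Equiv.refl _).sumCongr
            (Equiv.subtypeEquivRight fun x => Finset.mem_compl)).trans
          (Equiv.sumCompl (· ∈ I)))))

open Equiv Finset

lemma coe_finRotate_pow_apply (n k : ℕ) (x : Fin n) :
    ((finRotate n ^ k) x : ℕ) = (x + k) % n := by
  induction k with
  | zero => simp [Nat.mod_eq_of_lt x.isLt]
  | succ k ih =>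
    rcases n with _ | n
    · exact x.elim0
    rw [pow_succ', Perm.mul_apply, finRotate_apply, Fin.val_add, ih, Fin.val_one',
      Nat.add_mod_mod, Nat.mod_add_mod, add_assoc]

lemma sign_finRotate_pow {n k : ℕ} (hk : k ≤ n) :
    Perm.sign (finRotate n ^ k) = (-1) ^ (k * (n - k)) := by
  obtain ⟨m, rfl⟩ := Nat.exists_eq_add_of_le hk
  rw [map_pow, sign_finRotate, ← pow_mul, Nat.add_sub_cancel_left]
  rcases k with _ | k
  · simp
  · rw [show (k + 1 + m - 1) * (k + 1) = (k + 1) * m + k * (k + 1) by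
      rw [Nat.add_right_comm, Nat.add_sub_cancel]; ring,
      pow_add, (Nat.even_mul_succ_self k).neg_one_pow, mul_one]

lemma Finset.orderEmbOfFin_congr {α : Type*} [LinearOrder α] {s t : Finset α} (h : s = t)
    (i : ℕ) (hs : i < s.card) (ht : i < t.card) :
    s.orderEmbOfFin rfl ⟨i, hs⟩ = t.orderEmbOfFin rfl ⟨i, ht⟩ := by
  subst h; rfl

section

variable {D : ℕ} (I : Finset (Fin D))

lemma card_add_card_compl_fin : I.card + Iᶜ.card = D := by
  rw [card_add_card_compl, Fintype.card_fin]

lemma mergePerm_apply_of_lt (x : Fin D) (hx : x < I.card) :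
    mergePerm I x = I.orderEmbOfFin rfl ⟨x, hx⟩ := by
  have : Fin.cast (card_add_card_compl_fin I).symm x = Fin.castAdd _ ⟨x, hx⟩ := rfl
  simp only [mergePerm, trans_apply, finCongr_symm, finCongr_apply]
  rw [this, finSumFinEquiv_symm_apply_castAdd]
  rfl

lemma mergePerm_apply_of_le (x : Fin D) (hx : I.card ≤ x) :
    mergePerm I x = Iᶜ.orderEmbOfFin rfl ⟨x - I.card, by
      have := card_add_card_compl_fin I; omega⟩ := by
  have : Fin.cast (card_add_card_compl_fin I).symm x =
      Fin.natAdd _ ⟨x - I.card, by have := card_add_card_compl_fin I; omega⟩ :=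
    Fin.ext (by simp; omega)
  simp only [mergePerm, trans_apply, finCongr_symm, finCongr_apply]
  rw [this, finSumFinEquiv_symm_apply_natAdd]
  rfl

lemma mergePerm_compl : mergePerm Iᶜ = mergePerm I * finRotate D ^ I.card := by
  have hD := card_add_card_compl_fin I
  ext x
  rw [Perm.mul_apply]
  by_cases hx : (x : ℕ) < Iᶜ.card
  · have hy : ((finRotate D ^ I.card) x : ℕ) = x + I.card := by
      rw [coe_finRotate_pow_apply, Nat.mod_eq_of_lt (by omega)]
    rw [mergePerm_apply_of_lt Iᶜ x hx, mergePerm_apply_of_le I _ (by omega)]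
    simp only [hy, Nat.add_sub_cancel]
  · have hy : ((finRotate D ^ I.card) x : ℕ) = x - Iᶜ.card := by
      rw [coe_finRotate_pow_apply, Nat.mod_eq_sub_mod (by omega), Nat.mod_eq_of_lt (by omega)]
      omega
    rw [mergePerm_apply_of_le Iᶜ x (not_lt.1 hx), mergePerm_apply_of_lt I _ (by omega)]
    simp only [hy]
    exact congrArg Fin.val (orderEmbOfFin_congr (compl_compl I) _ _ _)

end

/-- For a `p`-element subset `I` of `Fin D`, the product of the signs of the merge
permutation of `I` and of the merge permutation of its complement `Iᶜ` is
`(-1) ^ (p * (D - p))`. -/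
theorem sign_mergePerm_mul_sign_mergePerm_compl (D p : ℕ) (hp : p ≤ D)
    (I : Finset (Fin D)) (hI : I.card = p) :
    Equiv.Perm.sign (mergePerm I) * Equiv.Perm.sign (mergePerm Iᶜ) =
      (-1 : ℤˣ) ^ (p * (D - p)) := by
  rw [mergePerm_compl, hI, map_mul, ← mul_assoc, Int.units_mul_self, one_mul,
    sign_finRotate_pow hp]
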